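/- arXiv:2301.01073 — 4 statements merged into one kernel-verified Lean document; each statement's English description precedes it below -/
import Mathlib

section
/- Let (X, M, μ) be a finite measure space, let ε > 0 and d ≥ 2. Then there exists N ∈ ℕ, depending only on μ(X), ε and d, such that for every family E₁, …, E_N of measurable sets there is an index ī with μ(E_ī \ ⋃_{j₁<j₂<⋯<j_d} (E_{j₁} ∩ E_{j₂} ∩ ⋯ ∩ E_{j_d})) < ε, where the union runs over all d-tuples of indices in {1,…,N}. -/
open MeasureTheory
open scoped ENNReal

/-- Covering lemma: in a finite measure space, for every `ε > 0` and `d ≥ 2` there is `N`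
(depending only on `μ(X)`, `ε`, `d`) such that any `N` measurable sets contain one which is
covered, up to measure `ε`, by the union of all `d`-fold intersections of the family. -/
theorem stmt1 {X : Type*} [MeasurableSpace X] (μ : Measure X) [IsFiniteMeasure μ]
    (ε : ℝ) (hε : 0 < ε) (d : ℕ) (hd : 2 ≤ d) :
    ∃ N : ℕ, ∀ E : Fin N → Set X, (∀ i, MeasurableSet (E i)) →
      ∃ i : Fin N,
        μ (E i \ ⋃ (s : Finset (Fin N)) (_ : s.card = d), ⋂ j ∈ s, E j)
          < ENNReal.ofReal ε := by
  classical
  have hε' : (0 : ℝ≥0∞) < ENNReal.ofReal ε := ENNReal.ofReal_pos.mpr hε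
  have hεne : ENNReal.ofReal ε ≠ 0 := hε'.ne'
  have hεtop : ENNReal.ofReal ε ≠ ⊤ := ENNReal.ofReal_ne_top
  set C : ℝ≥0∞ := (d - 1 : ℕ) * μ Set.univ with hC
  have hCne : C ≠ ⊤ := by
    refine ENNReal.mul_ne_top (by simp) (measure_ne_top μ _)
  obtain ⟨N, hN⟩ : ∃ N : ℕ, C / ENNReal.ofReal ε < N :=
    ENNReal.exists_nat_gt (by
      exact (ENNReal.div_lt_top hCne hεne).ne)
  have hNC : C < N * ENNReal.ofReal ε := by
    rwa [ENNReal.div_lt_iff (Or.inl hεne) (Or.inl hεtop)] at hN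
  refine ⟨N, fun E hE => ?_⟩
  set D : Set X := ⋃ (s : Finset (Fin N)) (_ : s.card = d), ⋂ j ∈ s, E j with hD
  by_contra h
  push_neg at h
  -- pointwise bound: each point outside D lies in at most d-1 sets
  set A : Fin N → Set X := fun i => E i \ D with hA
  have hAmeas : ∀ i, MeasurableSet (A i) := by
    intro i
    refine (hE i).diff ?_
    exact MeasurableSet.iUnion fun s => MeasurableSet.iUnion fun _ =>
      MeasurableSet.biInter s.countable_toSet fun j _ => hE j
  have hpt : ∀ x, (∑ i : Fin N, (A i).indicator (1 : X → ℝ≥0∞) x)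
      ≤ (d - 1 : ℕ) := by
    intro x
    have hsum : (∑ i : Fin N, (A i).indicator (1 : X → ℝ≥0∞) x)
        = ((Finset.univ.filter fun i : Fin N => x ∈ A i).card : ℝ≥0∞) := by
      rw [Finset.card_filter]
      push_cast
      refine Finset.sum_congr rfl fun i _ => ?_
      by_cases hx : x ∈ A i <;> simp [Set.indicator, hx]
    rw [hsum]
    norm_cast
    by_contra hcard
    push_neg at hcard
    have hdle : d ≤ (Finset.univ.filter fun i : Fin N => x ∈ A i).card := by omega
    obtain ⟨s, hs_sub, hs_card⟩ := Finset.exists_subset_card_eq hdle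
    have hxD : x ∈ D := by
      refine Set.mem_iUnion.mpr ⟨s, Set.mem_iUnion.mpr ⟨hs_card, ?_⟩⟩
      refine Set.mem_iInter₂.mpr fun j hj => ?_
      have := hs_sub hj
      simp only [Finset.mem_filter] at this
      exact this.2.1
    obtain ⟨i, hi⟩ := Finset.card_pos.mp (by omega :
      0 < (Finset.univ.filter fun i : Fin N => x ∈ A i).card)
    simp only [Finset.mem_filter] at hi
    exact hi.2.2 hxD
  have hsum_le : (∑ i : Fin N, μ (A i)) ≤ C := by
    have h1 : (∑ i : Fin N, μ (A i))
        = ∫⁻ x, ∑ i : Fin N, (A i).indicator (1 : X → ℝ≥0∞) x ∂μ := by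
      rw [lintegral_finset_sum _ fun i _ => (measurable_one.indicator (hAmeas i))]
      refine Finset.sum_congr rfl fun i _ => ?_
      exact (lintegral_indicator_one (hAmeas i)).symm
    rw [h1]
    calc ∫⁻ x, ∑ i : Fin N, (A i).indicator (1 : X → ℝ≥0∞) x ∂μ
        ≤ ∫⁻ _, ((d - 1 : ℕ) : ℝ≥0∞) ∂μ := lintegral_mono fun x => hpt x
      _ = C := by rw [lintegral_const]
  have hlb : (N : ℝ≥0∞) * ENNReal.ofReal ε ≤ ∑ i : Fin N, μ (A i) := by
    calc (N : ℝ≥0∞) * ENNReal.ofReal ε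
        = ∑ _i : Fin N, ENNReal.ofReal ε := by
          simp [Finset.sum_const, mul_comm]
      _ ≤ ∑ i : Fin N, μ (A i) := Finset.sum_le_sum fun i _ => h i
  exact absurd (hlb.trans hsum_le) (not_le.mpr hNC)
end

section
/- Let g : (0, R] → [0, ∞) be nondecreasing, let 0 < τ₀ < 1, 0 < τ₁ < 1, ε₀ > 0, ε₁ > 0 and r ∈ (0, R] satisfy: (i) g(r) ≤ ε₁·r; (ii) for every ρ ∈ (0, r], if g(ρ) > ρ^{3/2} then g(τ₀·ρ) ≤ τ₀^{3/2}·g(ρ); (iii) if g(r) > r^{3/2} then g(τ₁ r) ≤ τ₁^{3/2} g(r), and ε₁·√τ₁ ≤ ε₀, r^{1/2} ≤ ε₀ τ₁, and r ≤ ε₀² τ₀³ / τ₁. Then for all k ∈ ℕ: g(τ₀^k · τ₁ · r) ≤ ε₀ · τ₀^{3k/2} · τ₁ · r. -/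
/-- Iteration of the decay estimate: if `g` is nondecreasing and nonnegative on `(0, R]`,
`g(r) ≤ ε₁ r`, the decay `g(τ₀ρ) ≤ τ₀^{3/2} g(ρ)` holds at every scale `ρ ∈ (0, r]` where
`g(ρ) > ρ^{3/2}` (and likewise at the base scale with factor `τ₁`), and the numerical
conditions `ε₁√τ₁ ≤ ε₀`, `r^{1/2} ≤ ε₀τ₁`, `r ≤ ε₀²τ₀³/τ₁` hold, then
`g(τ₀^k τ₁ r) ≤ ε₀ τ₀^{3k/2} τ₁ r` for every `k`. -/
theorem stmt5 (R : ℝ) (g : ℝ → ℝ) (τ₀ τ₁ ε₀ ε₁ r : ℝ)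
    (hg0 : ∀ x ∈ Set.Ioc (0 : ℝ) R, 0 ≤ g x)
    (hgmono : ∀ x y : ℝ, 0 < x → x ≤ y → y ≤ R → g x ≤ g y)
    (hτ₀ : 0 < τ₀) (hτ₀' : τ₀ < 1) (hτ₁ : 0 < τ₁) (hτ₁' : τ₁ < 1)
    (hε₀ : 0 < ε₀) (hε₁ : 0 < ε₁) (hr : 0 < r) (hrR : r ≤ R)
    (h1 : g r ≤ ε₁ * r)
    (hdecay : ∀ ρ ∈ Set.Ioc (0 : ℝ) r, ρ ^ ((3 : ℝ) / 2) < g ρ →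
      g (τ₀ * ρ) ≤ τ₀ ^ ((3 : ℝ) / 2) * g ρ)
    (hbase : r ^ ((3 : ℝ) / 2) < g r → g (τ₁ * r) ≤ τ₁ ^ ((3 : ℝ) / 2) * g r)
    (hnum1 : ε₁ * Real.sqrt τ₁ ≤ ε₀)
    (hnum2 : r ^ ((1 : ℝ) / 2) ≤ ε₀ * τ₁)
    (hnum3 : r ≤ ε₀ ^ 2 * τ₀ ^ 3 / τ₁) :
    ∀ k : ℕ, g (τ₀ ^ k * τ₁ * r) ≤ ε₀ * τ₀ ^ ((3 * (k : ℝ)) / 2) * τ₁ * r := by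
  have hρpos : ∀ k : ℕ, 0 < τ₀ ^ k * τ₁ * r := fun k => by positivity
  have hρler : ∀ k : ℕ, τ₀ ^ k * τ₁ * r ≤ r := by
    intro k
    have hk : τ₀ ^ k ≤ 1 := pow_le_one₀ hτ₀.le hτ₀'.le
    calc τ₀ ^ k * τ₁ * r = τ₀ ^ k * (τ₁ * r) := by ring
      _ ≤ 1 * (τ₁ * r) := mul_le_mul_of_nonneg_right hk (by positivity)
      _ ≤ r := by nlinarith
  intro k
  induction k with
  | zero =>
    simp only [pow_zero, Nat.cast_zero, mul_zero, zero_div, Real.rpow_zero, one_mul, mul_one]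
    by_cases h : r ^ ((3:ℝ)/2) < g r
    · have h2 := hbase h
      have h4 : τ₁ ^ ((3:ℝ)/2) = Real.sqrt τ₁ * τ₁ := by
        rw [Real.sqrt_eq_rpow]
        nth_rewrite 3 [← Real.rpow_one τ₁]
        rw [← Real.rpow_add hτ₁]; norm_num
      calc g (τ₁ * r) ≤ τ₁ ^ ((3:ℝ)/2) * g r := h2
        _ ≤ τ₁ ^ ((3:ℝ)/2) * (ε₁ * r) :=
            mul_le_mul_of_nonneg_left h1 (Real.rpow_nonneg hτ₁.le _)
        _ = (ε₁ * Real.sqrt τ₁) * (τ₁ * r) := by rw [h4]; ring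
        _ ≤ ε₀ * (τ₁ * r) := mul_le_mul_of_nonneg_right hnum1 (by positivity)
        _ = ε₀ * τ₁ * r := by ring
    · push_neg at h
      have hmono : g (τ₁ * r) ≤ g r := hgmono _ _ (by positivity) (by nlinarith) hrR
      have hr32 : r ^ ((3:ℝ)/2) = r ^ ((1:ℝ)/2) * r := by
        nth_rewrite 3 [← Real.rpow_one r]
        rw [← Real.rpow_add hr]; norm_num
      calc g (τ₁ * r) ≤ r ^ ((3:ℝ)/2) := hmono.trans h
        _ = r ^ ((1:ℝ)/2) * r := hr32
        _ ≤ (ε₀ * τ₁) * r := mul_le_mul_of_nonneg_right hnum2 hr.le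
        _ = ε₀ * τ₁ * r := by ring
  | succ k ih =>
    set ρ := τ₀ ^ k * τ₁ * r with hρdef
    have hρ0 : 0 < ρ := hρpos k
    have hρr : ρ ≤ r := hρler k
    have hnext : τ₀ ^ (k+1) * τ₁ * r = τ₀ * ρ := by rw [hρdef]; ring
    have hexp : τ₀ ^ ((3 * ((k:ℝ)+1))/2) = τ₀ ^ ((3:ℝ)/2) * τ₀ ^ ((3*(k:ℝ))/2) := by
      rw [← Real.rpow_add hτ₀]; ring_nf
    by_cases h : ρ ^ ((3:ℝ)/2) < g ρ
    · have h2 := hdecay ρ ⟨hρ0, hρr⟩ h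
      rw [Nat.cast_succ, hnext]
      calc g (τ₀ * ρ) ≤ τ₀ ^ ((3:ℝ)/2) * g ρ := h2
        _ ≤ τ₀ ^ ((3:ℝ)/2) * (ε₀ * τ₀ ^ ((3*(k:ℝ))/2) * τ₁ * r) :=
            mul_le_mul_of_nonneg_left ih (Real.rpow_nonneg hτ₀.le _)
        _ = ε₀ * (τ₀ ^ ((3:ℝ)/2) * τ₀ ^ ((3*(k:ℝ))/2)) * τ₁ * r := by ring
        _ = ε₀ * τ₀ ^ ((3 * ((k:ℝ)+1))/2) * τ₁ * r := by rw [hexp]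
    · push_neg at h
      have hmono : g (τ₀ ^ (k+1) * τ₁ * r) ≤ g ρ := by
        apply hgmono _ _ (hρpos (k+1)) _ (hρr.trans hrR)
        rw [hnext]
        nlinarith [hτ₀'.le, hρ0]
      have hsqrt : (τ₁ * r) ^ ((1:ℝ)/2) ≤ ε₀ * τ₀ ^ ((3:ℝ)/2) := by
        have hτr : τ₁ * r ≤ (ε₀ * τ₀ ^ ((3:ℝ)/2)) ^ 2 := by
          have hsq : (τ₀ ^ ((3:ℝ)/2)) ^ 2 = τ₀ ^ (3:ℕ) := by
            rw [← Real.rpow_natCast (τ₀ ^ ((3:ℝ)/2)) 2, ← Real.rpow_mul hτ₀.le,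
              ← Real.rpow_natCast τ₀ 3]
            norm_num
          have : τ₁ * r ≤ ε₀ ^ 2 * τ₀ ^ 3 := by
            have h5 := (le_div_iff₀ hτ₁).mp hnum3
            linarith
          rw [mul_pow, hsq]; linarith
        calc (τ₁ * r) ^ ((1:ℝ)/2) ≤ ((ε₀ * τ₀ ^ ((3:ℝ)/2)) ^ 2) ^ ((1:ℝ)/2) :=
              Real.rpow_le_rpow (by positivity) hτr (by norm_num)
          _ = ε₀ * τ₀ ^ ((3:ℝ)/2) := by
              rw [← Real.rpow_natCast (ε₀ * τ₀ ^ ((3:ℝ)/2)) 2, ← Real.rpow_mul (by positivity)]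
              norm_num
      have hρ32 : ρ ^ ((3:ℝ)/2) = (τ₀ ^ k : ℝ) ^ ((3:ℝ)/2) * ((τ₁*r) ^ ((1:ℝ)/2) * (τ₁*r)) := by
        have : ρ = τ₀ ^ k * (τ₁ * r) := by rw [hρdef]; ring
        rw [this, Real.mul_rpow (by positivity) (by positivity)]
        congr 1
        nth_rewrite 3 [← Real.rpow_one (τ₁*r)]
        rw [← Real.rpow_add (by positivity)]; norm_num
      have hpowk : (τ₀ ^ k : ℝ) ^ ((3:ℝ)/2) = τ₀ ^ ((3*(k:ℝ))/2) := by
        rw [← Real.rpow_natCast τ₀ k, ← Real.rpow_mul hτ₀.le]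
        ring_nf
      rw [Nat.cast_succ]
      calc g (τ₀ ^ (k+1) * τ₁ * r) ≤ ρ ^ ((3:ℝ)/2) := hmono.trans h
        _ = τ₀ ^ ((3*(k:ℝ))/2) * ((τ₁*r) ^ ((1:ℝ)/2) * (τ₁*r)) := by rw [hρ32, hpowk]
        _ ≤ τ₀ ^ ((3*(k:ℝ))/2) * ((ε₀ * τ₀ ^ ((3:ℝ)/2)) * (τ₁*r)) := by
            apply mul_le_mul_of_nonneg_left _ (Real.rpow_nonneg hτ₀.le _)
            exact mul_le_mul_of_nonneg_right hsqrt (by positivity)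
        _ = ε₀ * (τ₀ ^ ((3:ℝ)/2) * τ₀ ^ ((3*(k:ℝ))/2)) * τ₁ * r := by ring
        _ = ε₀ * τ₀ ^ ((3 * ((k:ℝ)+1))/2) * τ₁ * r := by rw [hexp]
end

section
/- Let i, j ∈ ℝ^d with i ≠ j and ν ∈ ℝ^d with |ν| = 1, and let ε > 0, η > 0. Then there exist x₀ ∈ ℝ^d with |x₀| < ε and |i − x₀| ≠ |j − x₀|, and a continuous compactly supported function φ : (0,∞) → ℝ with ‖φ‖_∞ ≤ 1 and ∫₀^∞ φ(t) dt = 0, such that, setting G(x) := φ(|x − x₀|²/2)(x − x₀), one has (G(i) − G(j))·ν ≥ |i·ν| + |j·ν| − 2η. -/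
open MeasureTheory intervalIntegral

noncomputable def tent (r c t : ℝ) : ℝ := max 0 (1 - |t - c| / r)

lemma tent_nonneg (r c t : ℝ) : 0 ≤ tent r c t := le_max_left _ _

lemma tent_le_one {r : ℝ} (hr : 0 < r) (c t : ℝ) : tent r c t ≤ 1 := by
  unfold tent
  have : |t - c| / r ≥ 0 := by positivity
  simp only [max_le_iff]; constructor <;> linarith

lemma tent_self {r : ℝ} (hr : 0 < r) (c : ℝ) : tent r c c = 1 := by
  unfold tent; simp

lemma tent_eq_zero {r c t : ℝ} (hr : 0 < r) (h : r ≤ |t - c|) : tent r c t = 0 := by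
  unfold tent
  have : 1 ≤ |t - c| / r := (one_le_div hr).2 h
  simp only [max_eq_left_iff]; linarith

lemma tent_eq_zero' {r c t : ℝ} (hr : 0 < r) (h : t ∉ Set.Ioo (c - r) (c + r)) :
    tent r c t = 0 := by
  apply tent_eq_zero hr
  simp only [Set.mem_Ioo, not_and_or, not_lt] at h
  rcases h with h | h <;> cases abs_cases (t - c) <;> linarith

lemma tent_continuous (r c : ℝ) : Continuous (tent r c) := by
  unfold tent; fun_prop

lemma integral_abs_sub (c r : ℝ) (hr : 0 ≤ r) : ∫ t in (c - r)..(c + r), |t - c| = r ^ 2 := by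
  rw [intervalIntegral.integral_comp_sub_right (fun t => |t|) c]
  have e1 : c - r - c = -r := by ring
  have e2 : c + r - c = r := by ring
  rw [e1, e2]
  rw [← intervalIntegral.integral_add_adjacent_intervals (b := 0) (a := -r) (c := r)
    (by apply Continuous.intervalIntegrable; fun_prop) (by apply Continuous.intervalIntegrable; fun_prop)]
  have h1 : ∫ t in (-r)..(0:ℝ), |t| = ∫ t in (-r)..(0:ℝ), -t := by
    apply intervalIntegral.integral_congr
    intro t ht
    rw [Set.uIcc_of_le (by linarith)] at ht
    exact abs_of_nonpos ht.2
  have h2 : ∫ t in (0:ℝ)..r, |t| = ∫ t in (0:ℝ)..r, t := by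
    apply intervalIntegral.integral_congr
    intro t ht
    rw [Set.uIcc_of_le (by linarith)] at ht
    exact abs_of_nonneg ht.1
  rw [h1, h2, intervalIntegral.integral_neg, integral_id, integral_id]
  ring

lemma tent_integral {r : ℝ} (hr : 0 < r) (c : ℝ) : ∫ t, tent r c t = r := by
  rw [← setIntegral_eq_integral_of_forall_compl_eq_zero
    (s := Set.Ioc (c - r) (c + r)) (fun t ht => by
      apply tent_eq_zero hr
      simp only [Set.mem_Ioc, not_and_or, not_lt, not_le] at ht
      rcases ht with h | h <;> cases abs_cases (t - c) <;> linarith)]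
  rw [← intervalIntegral.integral_of_le (by linarith)]
  have hcong : ∀ t ∈ Set.uIcc (c - r) (c + r), tent r c t = 1 - |t - c| / r := by
    intro t ht
    rw [Set.uIcc_of_le (by linarith)] at ht
    unfold tent
    apply max_eq_right
    rw [sub_nonneg, div_le_one hr]
    cases abs_cases (t - c) <;> [linarith [ht.2]; linarith [ht.1]]
  rw [intervalIntegral.integral_congr hcong]
  rw [intervalIntegral.integral_sub (by apply Continuous.intervalIntegrable; fun_prop)
    (by apply Continuous.intervalIntegrable; fun_prop)]
  have : ∫ t in (c - r)..(c + r), |t - c| / r = (∫ t in (c - r)..(c + r), |t - c|) / r := by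
    simp [intervalIntegral.integral_div]
  rw [this, integral_abs_sub c r hr.le]
  simp
  field_simp
  ring

lemma tent_hcs {r : ℝ} (hr : 0 < r) (c : ℝ) : HasCompactSupport (tent r c) :=
  HasCompactSupport.intro isCompact_Icc (fun t ht => tent_eq_zero' hr
    (fun h => ht ⟨h.1.le, h.2.le⟩))

lemma key_phi (a b p q : ℝ) (ha : 0 < a) (hab : a < b) (hp : |p| ≤ 1) (hq : |q| ≤ 1) :
    ∃ φ : ℝ → ℝ, Continuous φ ∧ HasCompactSupport φ ∧ tsupport φ ⊆ Set.Ioi 0 ∧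
      (∀ t, |φ t| ≤ 1) ∧ (∫ t in Set.Ioi (0:ℝ), φ t) = 0 ∧ φ a = p ∧ φ b = q := by
  set r := min a (b - a) / 4 with hrdef
  have hr : 0 < r := by
    have h1 : 0 < min a (b - a) := lt_min ha (by linarith)
    positivity
  have hra : r ≤ a / 4 := by
    have := min_le_left a (b - a); rw [hrdef]; linarith
  have hrb : r ≤ (b - a) / 4 := by
    have := min_le_right a (b - a); rw [hrdef]; linarith
  set c := b + 4 * r with hcdef
  set s : ℝ := -(p + q) / 2 with hsdef
  have hs : |s| ≤ 1 := by
    rw [hsdef]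
    rw [abs_le] at hp hq ⊢
    constructor <;> [linarith [hp.2, hq.2]; linarith [hp.1, hq.1]]
  set φ : ℝ → ℝ := fun t => p * tent r a t + q * tent r b t + s * tent (2*r) c t with hφdef
  have h2r : 0 < 2 * r := by linarith
  have hzero : ∀ t ∉ Set.Icc (a - r) (c + 2*r), φ t = 0 := by
    intro t ht
    simp only [Set.mem_Icc, not_and_or, not_le] at ht
    have e1 : tent r a t = 0 := by
      apply tent_eq_zero hr; rcases ht with h | h <;> cases abs_cases (t - a) <;> linarith
    have e2 : tent r b t = 0 := by
      apply tent_eq_zero hr; rcases ht with h | h <;> cases abs_cases (t - b) <;> linarith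
    have e3 : tent (2*r) c t = 0 := by
      apply tent_eq_zero h2r; rcases ht with h | h <;> cases abs_cases (t - c) <;> linarith
    simp [hφdef, e1, e2, e3]
  have hcont : Continuous φ := by
    apply Continuous.add; apply Continuous.add
    all_goals exact continuous_const.mul (tent_continuous _ _)
  have hcs : HasCompactSupport φ := HasCompactSupport.intro isCompact_Icc hzero
  have htsupp : tsupport φ ⊆ Set.Icc (a - r) (c + 2*r) :=
    closure_minimal (Function.support_subset_iff'.2 hzero) isClosed_Icc
  refine ⟨φ, hcont, hcs, ?_, ?_, ?_, ?_, ?_⟩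
  · refine htsupp.trans (fun t ht => ?_)
    simp only [Set.mem_Icc] at ht
    simp only [Set.mem_Ioi]
    linarith [ht.1]
  · intro t
    have hb1 := tent_nonneg r a t
    have hb2 := tent_nonneg r b t
    have hb3 := tent_nonneg (2*r) c t
    have hu1 := tent_le_one hr a t
    have hu2 := tent_le_one hr b t
    have hu3 := tent_le_one h2r c t
    rcases lt_or_ge t (b - r) with h1 | h1
    · have e2 : tent r b t = 0 := by
        apply tent_eq_zero hr; cases abs_cases (t - b) <;> linarith
      have e3 : tent (2*r) c t = 0 := by
        apply tent_eq_zero h2r; cases abs_cases (t - c) <;> linarith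
      simp only [hφdef, e2, e3, mul_zero, add_zero]
      rw [abs_mul]
      calc |p| * |tent r a t| ≤ 1 * 1 := by
            apply mul_le_mul hp _ (abs_nonneg _) zero_le_one
            rw [abs_of_nonneg hb1]; exact hu1
        _ = 1 := by ring
    · have e1 : tent r a t = 0 := by
        apply tent_eq_zero hr; cases abs_cases (t - a) <;> linarith
      rcases lt_or_ge t (b + 2*r) with h2 | h2
      · have e3 : tent (2*r) c t = 0 := by
          apply tent_eq_zero h2r; cases abs_cases (t - c) <;> linarith
        simp only [hφdef, e1, e3, mul_zero, add_zero, zero_add]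
        rw [abs_mul]
        calc |q| * |tent r b t| ≤ 1 * 1 := by
              apply mul_le_mul hq _ (abs_nonneg _) zero_le_one
              rw [abs_of_nonneg hb2]; exact hu2
          _ = 1 := by ring
      · have e2 : tent r b t = 0 := by
          apply tent_eq_zero hr; cases abs_cases (t - b) <;> linarith
        simp only [hφdef, e1, e2, mul_zero, add_zero, zero_add]
        rw [abs_mul]
        calc |s| * |tent (2*r) c t| ≤ 1 * 1 := by
              apply mul_le_mul hs _ (abs_nonneg _) zero_le_one
              rw [abs_of_nonneg hb3]; exact hu3
          _ = 1 := by ring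
  · have hint1 : MeasureTheory.Integrable (fun t => p * tent r a t) :=
      ((tent_continuous r a).integrable_of_hasCompactSupport (tent_hcs hr a)).const_mul p
    have hint2 : MeasureTheory.Integrable (fun t => q * tent r b t) :=
      ((tent_continuous r b).integrable_of_hasCompactSupport (tent_hcs hr b)).const_mul q
    have hint3 : MeasureTheory.Integrable (fun t => s * tent (2*r) c t) :=
      ((tent_continuous (2*r) c).integrable_of_hasCompactSupport (tent_hcs h2r c)).const_mul s
    rw [setIntegral_eq_integral_of_forall_compl_eq_zero (fun t ht => by
      apply hzero; intro hm
      exact ht (by simp only [Set.mem_Ioi]; linarith [hm.1]))]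
    have hint12 : MeasureTheory.Integrable (fun t => p * tent r a t + q * tent r b t) :=
      by exact hint1.add hint2
    simp only [hφdef]
    rw [MeasureTheory.integral_add hint12 hint3,
      MeasureTheory.integral_add hint1 hint2,
      MeasureTheory.integral_const_mul, MeasureTheory.integral_const_mul,
      MeasureTheory.integral_const_mul, tent_integral hr a, tent_integral hr b,
      tent_integral h2r c]
    rw [hsdef]; ring
  · have e2 : tent r b a = 0 := by
      apply tent_eq_zero hr; cases abs_cases (a - b) <;> linarith
    have e3 : tent (2*r) c a = 0 := by
      apply tent_eq_zero h2r; cases abs_cases (a - c) <;> linarith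
    simp [hφdef, e2, e3, tent_self hr]
  · have e1 : tent r a b = 0 := by
      apply tent_eq_zero hr; cases abs_cases (b - a) <;> linarith
    have e3 : tent (2*r) c b = 0 := by
      apply tent_eq_zero h2r; cases abs_cases (b - c) <;> linarith
    simp [hφdef, e1, e3, tent_self hr]

open scoped RealInnerProductSpace

set_option maxHeartbeats 1000000 in
/-- Lower bound in (eq_fe): for `i ≠ j`, `|ν| = 1`, `ε, η > 0`, there exist a point `x₀` with
`|x₀| < ε`, `|i - x₀| ≠ |j - x₀|`, and a continuous compactly supported `φ` on `(0,∞)` with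
`‖φ‖_∞ ≤ 1` and zero integral such that, setting `G(x) = φ(|x - x₀|²/2)(x - x₀)`,
`(G(i) - G(j))·ν ≥ |i·ν| + |j·ν| - 2η`. -/
theorem stmt8 {d : ℕ} (i j ν : EuclideanSpace ℝ (Fin d)) (hij : i ≠ j)
    (hν : ‖ν‖ = 1) (ε η : ℝ) (hε : 0 < ε) (hη : 0 < η) :
    ∃ x₀ : EuclideanSpace ℝ (Fin d), ‖x₀‖ < ε ∧ ‖i - x₀‖ ≠ ‖j - x₀‖ ∧
      ∃ φ : ℝ → ℝ, Continuous φ ∧ HasCompactSupport φ ∧ tsupport φ ⊆ Set.Ioi 0 ∧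
        (∀ t, |φ t| ≤ 1) ∧ (∫ t in Set.Ioi (0 : ℝ), φ t) = 0 ∧
        |⟪i, ν⟫| + |⟪j, ν⟫| - 2 * η ≤
          ⟪φ (‖i - x₀‖ ^ 2 / 2) • (i - x₀) - φ (‖j - x₀‖ ^ 2 / 2) • (j - x₀), ν⟫ := by
  set w := i - j with hw
  have hw0 : w ≠ 0 := sub_ne_zero.mpr hij
  have hwn : 0 < ‖w‖ := norm_pos_iff.mpr hw0
  -- norm identity
  have hid : ∀ t : ℝ, ‖i - t • w‖ ^ 2 - ‖j - t • w‖ ^ 2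
      = ‖i‖ ^ 2 - ‖j‖ ^ 2 - 2 * t * ‖w‖ ^ 2 := by
    intro t
    rw [norm_sub_sq_real, norm_sub_sq_real, real_inner_smul_right, real_inner_smul_right]
    have : ⟪i, w⟫ - ⟪j, w⟫ = ‖w‖ ^ 2 := by
      rw [← inner_sub_left, ← hw, real_inner_self_eq_norm_sq]
    linear_combination (-2*t) * this
  -- bad set is finite
  set B : Set ℝ := {t | ‖i - t • w‖ = ‖j - t • w‖} ∪ ({t | i = t • w} ∪ {t | j = t • w})
    with hB
  have hBfin : B.Finite := by
    apply Set.Finite.union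
    · apply Set.Subsingleton.finite
      intro t ht t' ht'
      simp only [Set.mem_setOf_eq] at ht ht'
      have h1 := hid t
      have h2 := hid t'
      rw [ht] at h1; rw [ht'] at h2
      have : 2 * t * ‖w‖ ^ 2 = 2 * t' * ‖w‖ ^ 2 := by linarith
      have hw2 : 0 < ‖w‖ ^ 2 := by positivity
      nlinarith
    apply Set.Finite.union <;>
    · apply Set.Subsingleton.finite
      intro t ht t' ht'
      simp only [Set.mem_setOf_eq] at ht ht'
      have : (t - t') • w = 0 := by rw [sub_smul, ← ht, ← ht']; simp
      rcases smul_eq_zero.mp this with h | h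
      · linarith [sub_eq_zero.mp (by exact_mod_cast h)]
      · exact absurd h hw0
  -- choose t
  set δ := min ε (η / 2) with hδ
  have hδ0 : 0 < δ := lt_min hε (by linarith)
  have hex : (Set.Ioo (0:ℝ) (δ / ‖w‖) \ B).Nonempty :=
    ((Set.Ioo_infinite (by positivity)).diff hBfin).nonempty
  obtain ⟨t, htS, htB⟩ := hex
  set x₀ := t • w with hx₀
  have hxδ : ‖x₀‖ < δ := by
    rw [hx₀, norm_smul, Real.norm_eq_abs, abs_of_pos htS.1]
    calc t * ‖w‖ < (δ / ‖w‖) * ‖w‖ := mul_lt_mul_of_pos_right htS.2 hwn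
      _ = δ := by field_simp
  rw [hB] at htB
  simp only [Set.mem_union, Set.mem_setOf_eq, not_or] at htB
  obtain ⟨hne, hxi, hxj⟩ := htB
  rw [← hx₀] at hne hxi hxj
  have hi0 : (0:ℝ) < ‖i - x₀‖ := norm_pos_iff.mpr (sub_ne_zero.mpr (fun h => hxi h))
  have hj0 : (0:ℝ) < ‖j - x₀‖ := norm_pos_iff.mpr (sub_ne_zero.mpr (fun h => hxj h))
  set a := ‖i - x₀‖ ^ 2 / 2 with hadef
  set b := ‖j - x₀‖ ^ 2 / 2 with hbdef
  have ha : 0 < a := by rw [hadef]; positivity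
  have hb : 0 < b := by rw [hbdef]; positivity
  have hab : a ≠ b := by
    intro h
    apply hne
    have h2 : ‖i - x₀‖ ^ 2 = ‖j - x₀‖ ^ 2 := by
      rw [hadef, hbdef] at h; linarith
    calc ‖i - x₀‖ = Real.sqrt (‖i - x₀‖ ^ 2) := (Real.sqrt_sq (norm_nonneg _)).symm
      _ = Real.sqrt (‖j - x₀‖ ^ 2) := by rw [h2]
      _ = ‖j - x₀‖ := Real.sqrt_sq (norm_nonneg _)
  set A := (⟪i, ν⟫ : ℝ) with hA
  set Bv := (⟪j, ν⟫ : ℝ) with hBv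
  set X := (⟪x₀, ν⟫ : ℝ) with hX
  have hXb : |X| ≤ η / 2 := by
    calc |X| ≤ ‖x₀‖ * ‖ν‖ := abs_real_inner_le_norm _ _
      _ = ‖x₀‖ := by rw [hν, mul_one]
      _ ≤ η / 2 := le_trans hxδ.le (min_le_right _ _)
  have hdA : (0:ℝ) < |A| + η / 2 := by positivity
  have hdB : (0:ℝ) < |Bv| + η / 2 := by positivity
  set p := A / (|A| + η / 2) with hpdef
  set q := -Bv / (|Bv| + η / 2) with hqdef
  have hp : |p| ≤ 1 := by
    rw [hpdef, abs_div, abs_of_pos hdA]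
    rw [div_le_one hdA]; linarith
  have hq : |q| ≤ 1 := by
    rw [hqdef, abs_div, abs_of_pos hdB, abs_neg]
    rw [div_le_one hdB]; linarith
  have hkey : ∃ φ : ℝ → ℝ, Continuous φ ∧ HasCompactSupport φ ∧ tsupport φ ⊆ Set.Ioi 0 ∧
      (∀ t, |φ t| ≤ 1) ∧ (∫ t in Set.Ioi (0:ℝ), φ t) = 0 ∧ φ a = p ∧ φ b = q := by
    rcases lt_or_gt_of_ne hab with h | h
    · exact key_phi a b p q ha h hp hq
    · obtain ⟨φ, h1, h2, h3, h4, h5, h6, h7⟩ := key_phi b a q p hb h hq hp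
      exact ⟨φ, h1, h2, h3, h4, h5, h7, h6⟩
  obtain ⟨φ, hc1, hc2, hc3, hc4, hc5, hfa, hfb⟩ := hkey
  refine ⟨x₀, lt_of_lt_of_le hxδ (min_le_left _ _), hne, φ, hc1, hc2, hc3, hc4, hc5, ?_⟩
  rw [hfa, hfb, inner_sub_left, real_inner_smul_left, real_inner_smul_left,
    inner_sub_left, inner_sub_left]
  rw [← hA, ← hBv, ← hX]
  have hpA : |A| - η / 2 ≤ p * A := by
    rw [hpdef, div_mul_eq_mul_div, le_div_iff₀ hdA]
    nlinarith [sq_abs A]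
  have hqB : |Bv| - η / 2 ≤ -(q * Bv) := by
    have e : -(q * Bv) = Bv * Bv / (|Bv| + η / 2) := by rw [hqdef]; ring
    rw [e, le_div_iff₀ hdB]
    nlinarith [sq_abs Bv]
  have hpX : |p * X| ≤ η / 2 := by
    rw [abs_mul]
    calc |p| * |X| ≤ 1 * (η / 2) := mul_le_mul hp hXb (abs_nonneg _) zero_le_one
      _ = η / 2 := one_mul _
  have hqX : |q * X| ≤ η / 2 := by
    rw [abs_mul]
    calc |q| * |X| ≤ 1 * (η / 2) := mul_le_mul hq hXb (abs_nonneg _) zero_le_one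
      _ = η / 2 := one_mul _
  rw [abs_le] at hpX hqX
  nlinarith [hpA, hqB, hpX.1, hpX.2, hqX.1, hqX.2]
end

section
/- Let r > 0, δ ∈ (0, r), and set δ_k := δ r / 2^k and r_k := (N − 2^{−k})δ for k ≥ −2, where N = 1/δ ∈ ℕ. For a square q = z + [−t, t]², write q' := z + [−(8/7)t, (8/7)t]² and q'' := (q')'. Then (8/7)³ < 3/2, and consequently if two enlarged squares q''_{k,j} and q''_{p,i} from the dyadic covering (cubes of side δ_k tiling Q_{r_k} \ Q_{r_{k−1}}) intersect, then |k − p| ≤ 1, i.e. δ_k/δ_p ∈ {1/2, 1, 2}; in particular each q''_{k,j} meets at most a bounded number (8) of other enlarged squares, so the covering (q''_{k,j}) of Q_r has finite overlap bounded by a universal constant. -/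
/-- The closed square (sup-norm ball) of center `z` and half-side `t` in `ℝ²`. -/
def sqC (z : Fin 2 → ℝ) (t : ℝ) : Set (Fin 2 → ℝ) := {x | ∀ i, |x i - z i| ≤ t}

/-- Side of the squares of generation `k`: `δ_k = δ r / 2^k` with `δ = 1/N`. -/
noncomputable def dyadSide (N : ℕ) (r : ℝ) (k : ℕ) : ℝ := (1 / (N : ℝ)) * r / 2 ^ k

/-- Half-side of the `k`-th concentric square: `r_k = (N - 2^{-k}) δ r` with `δ = 1/N`. -/
noncomputable def dyadRad (N : ℕ) (r : ℝ) (k : ℕ) : ℝ :=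
  ((N : ℝ) - (1 / 2) ^ k) * (1 / (N : ℝ)) * r

/-- A square of side `δ_k` centered at `z` lies in the `k`-th dyadic layer: it is contained
in `Q_{r_k}` and, if `k ≥ 1`, it does not meet the interior of `Q_{r_{k-1}}`. -/
def InLayer (N : ℕ) (r : ℝ) (k : ℕ) (z : Fin 2 → ℝ) : Prop :=
  sqC z (dyadSide N r k / 2) ⊆ sqC 0 (dyadRad N r k) ∧
    (1 ≤ k → ∀ x ∈ sqC z (dyadSide N r k / 2), ∃ i, dyadRad N r (k - 1) ≤ |x i|)

private lemma dyadSide_pos {N : ℕ} (hN : 2 ≤ N) {r : ℝ} (hr : 0 < r) (k : ℕ) :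
    0 < dyadSide N r k := by
  have hN0 : (0:ℝ) < N := by exact_mod_cast (show 0 < N by omega)
  exact div_pos (mul_pos (by positivity) hr) (by positivity)

private lemma dyadSide_eq {N : ℕ} (r : ℝ) (m : ℕ) :
    dyadSide N r m = (1 / (N:ℝ)) * r * (1/2)^m := by
  rw [dyadSide, div_pow, one_pow, div_eq_mul_inv, div_eq_mul_inv, one_div]

private lemma dyadRad_eq {N : ℕ} (r : ℝ) (m : ℕ) :
    dyadRad N r m = ((N:ℝ) - (1/2)^m) * ((1/(N:ℝ)) * r) := by
  rw [dyadRad, mul_assoc]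

private lemma dyadRad_pos {N : ℕ} (hN : 2 ≤ N) {r : ℝ} (hr : 0 < r) (m : ℕ) :
    0 < dyadRad N r m := by
  have hN0 : (0:ℝ) < N := by exact_mod_cast (show 0 < N by omega)
  have hN2 : (2:ℝ) ≤ N := by exact_mod_cast hN
  have h1 : ((1:ℝ)/2)^m ≤ 1 := pow_le_one₀ (by norm_num) (by norm_num)
  rw [dyadRad_eq]
  have : (0:ℝ) < (N:ℝ) - (1/2)^m := by linarith
  positivity

private lemma layer_center_le {N : ℕ} (hN : 2 ≤ N) {r : ℝ} (hr : 0 < r) {k : ℕ}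
    {z : Fin 2 → ℝ} (h : InLayer N r k z) (i : Fin 2) :
    |z i| + dyadSide N r k / 2 ≤ dyadRad N r k := by
  set t := dyadSide N r k / 2 with htdef
  have ht : 0 ≤ t := by
    have := dyadSide_pos hN hr k; positivity
  have hmem : ∀ s : ℝ, |s| ≤ t → Function.update z i (z i + s) ∈ sqC z t := by
    intro s hs j
    rcases eq_or_ne j i with rfl | hj
    · simpa [Function.update_self] using hs
    · simp [Function.update_apply, hj, ht]
  have hp := h.1 (hmem t (by rw [abs_of_nonneg ht])) i
  have hm := h.1 (hmem (-t) (by rw [abs_neg, abs_of_nonneg ht])) i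
  simp only [Function.update_self, Pi.zero_apply, sub_zero] at hp hm
  rcases abs_cases (z i) with ⟨he, _⟩ | ⟨he, _⟩
  · have : z i + t ≤ |z i + t| := le_abs_self _
    linarith
  · have : -(z i + -t) ≤ |z i + -t| := neg_le_abs _
    linarith

private lemma layer_center_ge {N : ℕ} (hN : 2 ≤ N) {r : ℝ} (hr : 0 < r) {k : ℕ}
    (hk : 1 ≤ k) {z : Fin 2 → ℝ} (h : InLayer N r k z) :
    ∃ i, dyadRad N r (k-1) + dyadSide N r k / 2 ≤ |z i| := by
  set t := dyadSide N r k / 2 with htdef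
  have ht : 0 ≤ t := by
    have := dyadSide_pos hN hr k; positivity
  set x : Fin 2 → ℝ := fun j => max (z j - t) (min (z j + t) 0) with hxdef
  have hmem : x ∈ sqC z t := by
    intro j
    rw [abs_le]
    constructor
    · have : z j - t ≤ x j := le_max_left _ _
      linarith
    · have : x j ≤ z j + t := max_le (by linarith) (le_trans (min_le_left _ _) le_rfl)
      linarith
  obtain ⟨i, hi⟩ := h.2 hk x hmem
  have hrad := dyadRad_pos hN hr (k-1)
  refine ⟨i, ?_⟩
  have hx0 : x i ≠ 0 := by
    intro h0
    rw [h0, abs_zero] at hi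
    linarith
  rcases lt_or_gt_of_ne hx0 with hneg | hpos
  · -- x i < 0 : x i = z i + t
    have hb : min (z i + t) 0 ≤ x i := le_max_right _ _
    have hup : x i ≤ z i + t := max_le (by linarith) (le_trans (min_le_left _ _) le_rfl)
    have hmin : min (z i + t) 0 = z i + t := by
      rcases min_cases (z i + t) 0 with ⟨h1, _⟩ | ⟨h1, h2⟩
      · exact h1
      · exfalso; rw [h1] at hb; linarith
    rw [hmin] at hb
    have hxe : x i = z i + t := le_antisymm hup hb
    rw [abs_of_neg hneg] at hi
    have : z i ≤ -(dyadRad N r (k-1)) - t := by linarith [hxe ▸ hi]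
    have : -(z i) ≤ |z i| := neg_le_abs _
    linarith [hxe ▸ hi]
  · -- x i > 0 : x i = z i - t
    have hxe : x i = z i - t := by
      rcases max_cases (z i - t) (min (z i + t) 0) with ⟨h1, _⟩ | ⟨h1, _⟩
      · exact h1
      · exfalso
        have : min (z i + t) 0 ≤ 0 := min_le_right _ _
        rw [hxdef] at hpos
        simp only at hpos
        rw [h1] at hpos
        linarith
    rw [abs_of_pos hpos] at hi
    have h1 : dyadRad N r (k-1) + t ≤ z i := by linarith [hxe ▸ hi]
    have : z i ≤ |z i| := le_abs_self _
    linarith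

private lemma sep {N : ℕ} (hN : 2 ≤ N) {r : ℝ} (hr : 0 < r) {k p : ℕ} (hkp : p + 2 ≤ k)
    {z w x : Fin 2 → ℝ} (hz : InLayer N r k z) (hw : InLayer N r p w)
    (h1 : x ∈ sqC z ((8/7)^2 * dyadSide N r k / 2))
    (h2 : x ∈ sqC w ((8/7)^2 * dyadSide N r p / 2)) : False := by
  obtain ⟨i, hi⟩ := layer_center_ge hN hr (by omega) hz
  have hA := layer_center_le hN hr hw i
  have hxz := h1 i
  have hxw := h2 i
  have hlow : dyadRad N r (k-1) + dyadSide N r k / 2 - (8/7)^2 * dyadSide N r k / 2 ≤ |x i| := by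
    have h3 : |z i| - |x i| ≤ |z i - x i| := abs_sub_abs_le_abs_sub _ _
    rw [abs_sub_comm] at h3
    linarith
  have hup : |x i| ≤ (8/7)^2 * dyadSide N r p / 2 + (dyadRad N r p - dyadSide N r p / 2) := by
    have h4 : |x i| - |w i| ≤ |x i - w i| := abs_sub_abs_le_abs_sub _ _
    linarith
  -- arithmetic contradiction
  have hN0 : (0:ℝ) < N := by exact_mod_cast (show 0 < N by omega)
  have hs : (0:ℝ) < 1/(N:ℝ) * r := by positivity
  set s := 1/(N:ℝ) * r with hsdef
  obtain ⟨k', rfl⟩ : ∃ k', k = k' + 1 := ⟨k-1, by omega⟩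
  set a := ((1:ℝ)/2)^p with hadef
  set b := ((1:ℝ)/2)^(k'+1) with hbdef
  have ha : 0 < a := by positivity
  have hab : b ≤ a / 4 := by
    have h5 : ((1:ℝ)/2)^(k'+1) ≤ (1/2)^(p+2) :=
      pow_le_pow_of_le_one (by norm_num) (by norm_num) (by omega)
    calc b ≤ ((1:ℝ)/2)^(p+2) := h5
      _ = a / 4 := by rw [pow_add, hadef]; ring
  have hbb : ((1:ℝ)/2)^(k'+1-1) = 2 * b := by
    have : k' + 1 - 1 = k' := rfl
    rw [this, hbdef, pow_succ]; ring
  rw [dyadSide_eq, dyadRad_eq, hbb, ← hbdef, ← hsdef] at hlow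
  rw [dyadSide_eq, dyadRad_eq, ← hadef, ← hsdef] at hup
  nlinarith [mul_pos hs ha, mul_le_mul_of_nonneg_left hab hs.le, hs.le, ha.le]

private lemma layers_close {N : ℕ} (hN : 2 ≤ N) {r : ℝ} (hr : 0 < r)
    {k p : ℕ} {z w x : Fin 2 → ℝ} (hz : InLayer N r k z) (hw : InLayer N r p w)
    (hx1 : x ∈ sqC z ((8/7)^2 * dyadSide N r k / 2))
    (hx2 : x ∈ sqC w ((8/7)^2 * dyadSide N r p / 2)) :
    |(k:ℤ) - (p:ℤ)| ≤ 1 := by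
  by_contra h
  rw [abs_le] at h
  push_neg at h
  have hcase : p + 2 ≤ k ∨ k + 2 ≤ p := by omega
  rcases hcase with hc | hc
  · exact sep hN hr hc hz hw hx1 hx2
  · exact sep hN hr hc hw hz hx2 hx1

private lemma open_subset_interior (z : Fin 2 → ℝ) (t : ℝ) :
    {y : Fin 2 → ℝ | ∀ c, |y c - z c| < t} ⊆ interior (sqC z t) := by
  apply interior_maximal
  · exact fun y hy c => (hy c).le
  · have he : {y : Fin 2 → ℝ | ∀ c, |y c - z c| < t} = ⋂ c, {y | |y c - z c| < t} := by
      ext y; simp [Set.mem_iInter]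
    rw [he]
    exact isOpen_iInter_of_finite fun c =>
      isOpen_lt (((continuous_apply c).sub continuous_const).abs) continuous_const

/-- Finite-overlap property of the Whitney-type covering in the Smoothing Lemma:
`(8/7)³ < 3/2`; if two enlarged squares `q''` (enlargement factor `(8/7)²`) from layers `k`
and `p` intersect, then `|k - p| ≤ 1`; and the enlarged squares of any family of squares with
pairwise disjoint interiors, each lying in its layer, have overlap bounded by a universal
constant. -/
theorem stmt15 :
    ((8 / 7 : ℝ) ^ 3 < 3 / 2)
    ∧ (∀ (N : ℕ), 2 ≤ N → ∀ r : ℝ, 0 < r → r ≤ 1 →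
        ∀ (k p : ℕ) (z w : Fin 2 → ℝ), InLayer N r k z → InLayer N r p w →
          (sqC z ((8 / 7) ^ 2 * dyadSide N r k / 2)
            ∩ sqC w ((8 / 7) ^ 2 * dyadSide N r p / 2)).Nonempty →
          |(k : ℤ) - (p : ℤ)| ≤ 1)
    ∧ ∃ C : ℕ, ∀ (N : ℕ), 2 ≤ N → ∀ r : ℝ, 0 < r → r ≤ 1 →
        ∀ (ι : Type) (z : ι → Fin 2 → ℝ) (lay : ι → ℕ),
          (∀ i, InLayer N r (lay i) (z i)) →
          (Pairwise fun i j => Disjoint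
            (interior (sqC (z i) (dyadSide N r (lay i) / 2)))
            (interior (sqC (z j) (dyadSide N r (lay j) / 2)))) →
          ∀ x : Fin 2 → ℝ,
            {i | x ∈ sqC (z i) ((8 / 7) ^ 2 * dyadSide N r (lay i) / 2)}.Finite ∧
            {i | x ∈ sqC (z i) ((8 / 7) ^ 2 * dyadSide N r (lay i) / 2)}.ncard ≤ C := by
  refine ⟨by norm_num, ?_, ?_⟩
  · rintro N hN r hr _ k p z w hz hw ⟨x, hx1, hx2⟩
    exact layers_close hN hr hz hw hx1 hx2
  · refine ⟨12, ?_⟩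
    intro N hN r hr hr1 ι z lay hlay hdisj x
    set S := {i : ι | x ∈ sqC (z i) ((8 / 7) ^ 2 * dyadSide N r (lay i) / 2)} with hSdef
    -- per-layer bound
    have layer_bd : ∀ k : ℕ,
        ({i : ι | lay i = k ∧ i ∈ S}).Finite ∧ ({i : ι | lay i = k ∧ i ∈ S}).ncard ≤ 4 := by
      intro k
      set f : ι → Bool × Bool := fun i => (decide (z i 0 ≤ x 0), decide (z i 1 ≤ x 1)) with hfdef
      have hinj : Set.InjOn f {i : ι | lay i = k ∧ i ∈ S} := by
        rintro i ⟨hik, hxi⟩ j ⟨hjk, hxj⟩ hf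
        by_contra hne
        have hd := hdisj hne
        simp only [hfdef, Prod.ext_iff, decide_eq_decide] at hf
        have hiff : ∀ c, (z i c ≤ x c ↔ z j c ≤ x c) := by
          rw [Fin.forall_fin_two]; exact hf
        have hδ : 0 < dyadSide N r k := dyadSide_pos hN hr k
        have hc : ∀ c, |z i c - z j c| < dyadSide N r k := by
          intro c
          have h1 := hxi c
          have h2 := hxj c
          rw [hik] at h1
          rw [hjk] at h2
          rw [abs_le] at h1 h2
          rw [abs_lt]
          rcases le_or_gt (z i c) (x c) with hzi | hzi
          · have hzj := (hiff c).mp hzi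
            constructor <;> nlinarith [h1.1, h1.2, h2.1, h2.2]
          · have hzj : ¬ z j c ≤ x c := fun hh => hzi.not_ge ((hiff c).mpr hh)
            push_neg at hzj
            constructor <;> nlinarith [h1.1, h1.2, h2.1, h2.2]
        set y : Fin 2 → ℝ := fun c => (z i c + z j c) / 2 with hydef
        have hyi : y ∈ interior (sqC (z i) (dyadSide N r (lay i) / 2)) := by
          apply open_subset_interior
          intro c
          have hcc := abs_lt.mp (hc c)
          rw [hik]
          show |(z i c + z j c) / 2 - z i c| < dyadSide N r k / 2
          rw [abs_lt]
          constructor <;> [linarith; linarith]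
        have hyj : y ∈ interior (sqC (z j) (dyadSide N r (lay j) / 2)) := by
          apply open_subset_interior
          intro c
          have hcc := abs_lt.mp (hc c)
          rw [hjk]
          show |(z i c + z j c) / 2 - z j c| < dyadSide N r k / 2
          rw [abs_lt]
          constructor <;> [linarith; linarith]
        exact Set.disjoint_left.mp hd hyi hyj
      have hfin : ({i : ι | lay i = k ∧ i ∈ S}).Finite :=
        Set.Finite.of_finite_image (Set.toFinite _) hinj
      refine ⟨hfin, ?_⟩
      have hcard := Set.ncard_le_ncard_of_injOn f (fun a _ => Set.mem_univ (f a)) hinj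
        (Set.toFinite _)
      simpa [Set.ncard_univ] using hcard
    rcases Set.eq_empty_or_nonempty S with hS | ⟨i₀, hi₀⟩
    · rw [hS]; simp
    · set m := lay i₀ with hmdef
      have hsub : S ⊆ {i : ι | lay i = m - 1 ∧ i ∈ S} ∪
          ({i : ι | lay i = m ∧ i ∈ S} ∪ {i : ι | lay i = m + 1 ∧ i ∈ S}) := by
        intro j hj
        have hcl := layers_close hN hr (hlay j) (hlay i₀) hj hi₀
        rw [abs_le] at hcl
        have : lay j = m - 1 ∨ lay j = m ∨ lay j = m + 1 := by omega
        rcases this with h | h | h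
        · exact Or.inl ⟨h, hj⟩
        · exact Or.inr (Or.inl ⟨h, hj⟩)
        · exact Or.inr (Or.inr ⟨h, hj⟩)
      have hfin1 := (layer_bd (m-1)).1
      have hfin2 := (layer_bd m).1
      have hfin3 := (layer_bd (m+1)).1
      have hfinU := hfin1.union (hfin2.union hfin3)
      have hfinS : S.Finite := hfinU.subset hsub
      refine ⟨hfinS, ?_⟩
      calc S.ncard ≤ ({i : ι | lay i = m - 1 ∧ i ∈ S} ∪
            ({i : ι | lay i = m ∧ i ∈ S} ∪ {i : ι | lay i = m + 1 ∧ i ∈ S})).ncard :=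
          Set.ncard_le_ncard hsub hfinU
        _ ≤ ({i : ι | lay i = m - 1 ∧ i ∈ S}).ncard +
            ({i : ι | lay i = m ∧ i ∈ S} ∪ {i : ι | lay i = m + 1 ∧ i ∈ S}).ncard :=
          Set.ncard_union_le _ _
        _ ≤ ({i : ι | lay i = m - 1 ∧ i ∈ S}).ncard +
            (({i : ι | lay i = m ∧ i ∈ S}).ncard + ({i : ι | lay i = m + 1 ∧ i ∈ S}).ncard) := by
          gcongr; exact Set.ncard_union_le _ _
        _ ≤ 4 + (4 + 4) := by
          gcongr <;> [exact (layer_bd _).2; exact (layer_bd _).2; exact (layer_bd _).2]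
        _ ≤ 12 := by norm_num
end
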